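/- Label-neighbouring sensitivity (Lemma B.1, Case 1): Let C_Z > 0. For every n ≥ 2, every d ≥ 1, every β ∈ ℝ^d, and every pair of survival datasets D, D' of size n that satisfy the covariate bound C_Z and agree in all observed times and all covariate paths while differing in at most one censoring indicator, one has ‖ℓ̇(β; D) − ℓ̇(β; D')‖₂ ≤ 2 C_Z / n. Moreover, for every n ≥ 2 and d ≥ 1 there exists such a pair of datasets satisfying the covariate bound 1 (namely Z_1 ≡ e_1 and Z_j ≡ −e_1 for j ≥ 2, all Δ_j = 1 in D and Δ_1 flipped to 0 in D', with T_1 the smallest time) and β = 0 for which ‖ℓ̇(0; D) − ℓ̇(0; D')‖₂ = 2(n−1)/n² ≥ 1/n. Hence the sensitivity of the Cox score with respect to a single censoring indicator is of exact order 1/n. -/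

import Mathlib

open scoped BigOperators
open MeasureTheory Real
open scoped RealInnerProductSpace
noncomputable section

structure SurvData (n d : ℕ) where
  T : Fin n → ℝ
  Δ : Fin n → Bool
  Z : Fin n → ℝ → EuclideanSpace ℝ (Fin d)

namespace SurvData

variable {n d : ℕ}

/-- Observed times lie in `[0,1]`. -/
def valid (D : SurvData n d) : Prop := ∀ i, D.T i ∈ Set.Icc (0 : ℝ) 1

/-- Covariate bound: `‖Z_i(t)‖₂ ≤ C_Z` for all `i` and all `t ∈ [0,1]`. -/
def covBound (D : SurvData n d) (CZ : ℝ) : Prop :=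
  ∀ i, ∀ t ∈ Set.Icc (0 : ℝ) 1, ‖D.Z i t‖ ≤ CZ

def S0 (D : SurvData n d) (β : EuclideanSpace ℝ (Fin d)) (t : ℝ) : ℝ :=
  (n : ℝ)⁻¹ * ∑ j, if t ≤ D.T j then Real.exp ⟪β, D.Z j t⟫ else 0

def S1 (D : SurvData n d) (β : EuclideanSpace ℝ (Fin d)) (t : ℝ) :
    EuclideanSpace ℝ (Fin d) :=
  (n : ℝ)⁻¹ • ∑ j, if t ≤ D.T j then Real.exp ⟪β, D.Z j t⟫ • D.Z j t else 0

def Zbar (D : SurvData n d) (β : EuclideanSpace ℝ (Fin d)) (t : ℝ) :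
    EuclideanSpace ℝ (Fin d) :=
  (D.S0 β t)⁻¹ • D.S1 β t

/-- The Cox partial-likelihood score `ℓ̇(β; D)`. -/
def score (D : SurvData n d) (β : EuclideanSpace ℝ (Fin d)) :
    EuclideanSpace ℝ (Fin d) :=
  (n : ℝ)⁻¹ • ∑ i, if D.Δ i then D.Z i (D.T i) - D.Zbar β (D.T i) else 0

/-- Neighbouring datasets: they differ in at most one triple. -/
def Neighbor (D D' : SurvData n d) : Prop :=
  ∃ i0 : Fin n, ∀ i, i ≠ i0 → D.T i = D'.T i ∧ D.Δ i = D'.Δ i ∧ D.Z i = D'.Z i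

end SurvData

/-- Label-neighbouring datasets: same times and covariate paths, at most one
censoring indicator differs. -/
def SurvData.LabelNeighbor {n d : ℕ} (D D' : SurvData n d) : Prop :=
  D.T = D'.T ∧ D.Z = D'.Z ∧ ∃ i0 : Fin n, ∀ i, i ≠ i0 → D.Δ i = D'.Δ i

/-!
`Z̄(t, β)` is a centre of mass of the covariates `Z_j(t)`, with weights `1{T_j ≥ t} exp(βᵀZ_j(t))`,
so it lies in the ball of radius `C_Z` whenever someone is at risk at `t`. Flipping one censoring
indicator `Δ_i` leaves `Z̄` unchanged and adds or removes the single summand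
`n⁻¹ (Z_i(T_i) − Z̄(T_i, β))`, of norm at most `2 C_Z / n`. In the extremal pair every individual is
at risk at `T_1 = 0` and `β = 0`, so `Z̄(0, 0) = n⁻¹ (e₁ − (n − 1) e₁)` and the flipped summand is
`n⁻¹ · 2(n − 1)/n · e₁`.
-/

theorem norm_ite_sub_ite_le {E : Type*} [SeminormedAddCommGroup E] (a b : Bool) (r : E) :
    ‖(if a then r else 0) - (if b then r else 0)‖ ≤ ‖r‖ := by
  cases a <;> cases b <;> simp

namespace SurvData

variable {n d : ℕ}

def riskWeight (D : SurvData n d) (β : EuclideanSpace ℝ (Fin d)) (t : ℝ) (j : Fin n) : ℝ :=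
  if t ≤ D.T j then Real.exp ⟪β, D.Z j t⟫ else 0

theorem Zbar_eq_centerMass (D : SurvData n d) (β : EuclideanSpace ℝ (Fin d)) (t : ℝ) :
    D.Zbar β t = Finset.univ.centerMass (D.riskWeight β t) (fun j => D.Z j t) := by
  unfold Zbar S0 S1 Finset.centerMass riskWeight
  simp_rw [ite_smul, zero_smul]
  rcases Nat.eq_zero_or_pos n with rfl | hn
  · simp
  · rw [mul_inv, inv_inv, smul_smul]
    congr 1
    field_simp

theorem norm_Zbar_le (D : SurvData n d) (β : EuclideanSpace ℝ (Fin d)) {CZ t : ℝ} {j : Fin n}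
    (hC : D.covBound CZ) (ht : t ∈ Set.Icc (0 : ℝ) 1) (hj : t ≤ D.T j) :
    ‖D.Zbar β t‖ ≤ CZ := by
  rw [Zbar_eq_centerMass, ← mem_closedBall_zero_iff]
  refine (convex_closedBall 0 CZ).centerMass_mem (fun i _ => ?_) ?_
    (fun i _ => mem_closedBall_zero_iff.2 (hC i t ht))
  · unfold riskWeight
    split_ifs <;> positivity
  · exact Finset.sum_pos' (fun i _ => by unfold riskWeight; split_ifs <;> positivity)
      ⟨j, Finset.mem_univ j, by simp [riskWeight, hj, Real.exp_pos]⟩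

def residual (D : SurvData n d) (β : EuclideanSpace ℝ (Fin d)) (i : Fin n) :
    EuclideanSpace ℝ (Fin d) :=
  D.Z i (D.T i) - D.Zbar β (D.T i)

theorem score_eq_sum_residual (D : SurvData n d) (β : EuclideanSpace ℝ (Fin d)) :
    D.score β = (n : ℝ)⁻¹ • ∑ i, if D.Δ i then D.residual β i else 0 :=
  rfl

theorem residual_congr {D D' : SurvData n d} (hT : D.T = D'.T) (hZ : D.Z = D'.Z)
    (β : EuclideanSpace ℝ (Fin d)) : D.residual β = D'.residual β := by
  cases D
  cases D'
  subst hT hZ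
  rfl

theorem norm_residual_le (D : SurvData n d) (β : EuclideanSpace ℝ (Fin d)) {CZ : ℝ}
    (hv : D.valid) (hC : D.covBound CZ) (i : Fin n) : ‖D.residual β i‖ ≤ 2 * CZ :=
  calc ‖D.residual β i‖ ≤ ‖D.Z i (D.T i)‖ + ‖D.Zbar β (D.T i)‖ := norm_sub_le _ _
    _ ≤ CZ + CZ := add_le_add (hC i _ (hv i)) (D.norm_Zbar_le β hC (hv i) le_rfl)
    _ = 2 * CZ := by ring

theorem score_sub_score_eq {D D' : SurvData n d} {i0 : Fin n} (hT : D.T = D'.T) (hZ : D.Z = D'.Z)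
    (hΔ : ∀ i, i ≠ i0 → D.Δ i = D'.Δ i) (β : EuclideanSpace ℝ (Fin d)) :
    D.score β - D'.score β = (n : ℝ)⁻¹ •
      ((if D.Δ i0 then D.residual β i0 else 0) - (if D'.Δ i0 then D.residual β i0 else 0)) := by
  rw [score_eq_sum_residual, score_eq_sum_residual, ← residual_congr hT hZ, ← smul_sub,
    ← Finset.sum_sub_distrib, Fintype.sum_eq_single i0]
  intro i hi
  rw [hΔ i hi, sub_self]

theorem norm_score_sub_le_of_labelNeighbor {D D' : SurvData n d} {CZ : ℝ} (hv : D.valid)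
    (hC : D.covBound CZ) (h : D.LabelNeighbor D') (β : EuclideanSpace ℝ (Fin d)) :
    ‖D.score β - D'.score β‖ ≤ 2 * CZ / n := by
  obtain ⟨hT, hZ, i0, hΔ⟩ := h
  rw [score_sub_score_eq hT hZ hΔ, norm_smul, norm_inv, RCLike.norm_natCast, ← div_eq_inv_mul]
  gcongr
  exact (norm_ite_sub_ite_le _ _ _).trans (D.norm_residual_le β hv hC i0)

def extremal (hn : 0 < n) (hd : 0 < d) (Δ : Fin n → Bool) : SurvData n d where
  T i := if i = ⟨0, hn⟩ then 0 else 1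
  Δ := Δ
  Z i _ := if i = ⟨0, hn⟩ then EuclideanSpace.single ⟨0, hd⟩ 1
    else -EuclideanSpace.single ⟨0, hd⟩ 1

variable (hn : 0 < n) (hd : 0 < d) (Δ : Fin n → Bool)

@[simp]
theorem extremal_Δ : (extremal hn hd Δ).Δ = Δ :=
  rfl

theorem extremal_valid : (extremal hn hd Δ).valid := by
  intro i
  by_cases h : i = ⟨0, hn⟩ <;> simp [extremal, h]

theorem extremal_covBound : (extremal hn hd Δ).covBound 1 := by
  intro i t _
  by_cases h : i = ⟨0, hn⟩ <;> simp [extremal, h]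

theorem extremal_labelNeighbor {Δ' : Fin n → Bool} (h : ∀ i, i ≠ ⟨0, hn⟩ → Δ i = Δ' i) :
    (extremal hn hd Δ).LabelNeighbor (extremal hn hd Δ') :=
  ⟨rfl, rfl, _, h⟩

theorem extremal_Zbar_zero :
    (extremal hn hd Δ).Zbar 0 0 = ((2 - n) / n : ℝ) • EuclideanSpace.single ⟨0, hd⟩ 1 := by
  have hw : (extremal hn hd Δ).riskWeight 0 0 = fun _ => 1 := by
    funext j
    by_cases h : j = ⟨0, hn⟩ <;> simp [riskWeight, extremal, h]
  have hsum : ∑ j, (extremal hn hd Δ).Z j 0 = (2 - n : ℝ) • EuclideanSpace.single ⟨0, hd⟩ 1 := by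
    have hrest : ∀ j ∈ ({⟨0, hn⟩}ᶜ : Finset (Fin n)),
        (extremal hn hd Δ).Z j 0 = -EuclideanSpace.single ⟨0, hd⟩ 1 := fun j hj =>
      if_neg (by simpa using hj)
    rw [Fintype.sum_eq_add_sum_compl ⟨0, hn⟩, Finset.sum_congr rfl hrest]
    simp only [extremal, if_true, Finset.sum_const, Finset.card_compl, Finset.card_singleton,
      Fintype.card_fin]
    rw [← Nat.cast_smul_eq_nsmul ℝ, Nat.cast_sub hn, Nat.cast_one]
    module
  rw [Zbar_eq_centerMass, hw, Finset.centerMass]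
  simp only [one_smul, Finset.sum_const, Finset.card_univ, Fintype.card_fin, nsmul_eq_mul, mul_one]
  rw [hsum, smul_smul, inv_mul_eq_div]

theorem extremal_residual :
    (extremal hn hd Δ).residual 0 ⟨0, hn⟩
      = (2 * (n - 1) / n : ℝ) • EuclideanSpace.single ⟨0, hd⟩ 1 := by
  have hT : (extremal hn hd Δ).T ⟨0, hn⟩ = 0 := by simp [extremal]
  have hZ : (extremal hn hd Δ).Z ⟨0, hn⟩ 0 = EuclideanSpace.single ⟨0, hd⟩ 1 := by
    simp [extremal]
  have hcoef : (1 - (2 - n) / n : ℝ) = 2 * (n - 1) / n := by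
    field_simp
    ring
  rw [residual, hT, hZ, extremal_Zbar_zero, ← hcoef, sub_smul, one_smul]

theorem norm_score_sub_score_extremal :
    ‖(extremal hn hd fun _ => true).score 0
        - (extremal hn hd fun i => decide (i ≠ ⟨0, hn⟩)).score 0‖
      = 2 * (n - 1) / (n : ℝ) ^ 2 := by
  rw [score_sub_score_eq (D := extremal hn hd fun _ => true)
    (D' := extremal hn hd fun i => decide (i ≠ ⟨0, hn⟩)) (i0 := ⟨0, hn⟩) rfl rfl
    fun i hi => by simp [extremal, hi]]
  simp only [extremal_Δ, ne_eq, not_true_eq_false, decide_false, if_true, Bool.false_eq_true,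
    if_false, sub_zero, extremal_residual]
  have hn1 : (1 : ℝ) ≤ n := Nat.one_le_cast.2 hn
  have hcoef : (n : ℝ)⁻¹ * (2 * (n - 1) / n) = 2 * (n - 1) / (n : ℝ) ^ 2 := by
    field_simp
  rw [smul_smul, norm_smul, PiLp.norm_single, norm_one, mul_one, hcoef,
    Real.norm_of_nonneg (by have := sub_nonneg.2 hn1; positivity)]

end SurvData

/-- Lemma B.1 (Case 1): the sensitivity of the Cox score with respect to a single
censoring indicator is of exact order `1/n`: the upper bound `2 C_Z / n` always
holds, and it is attained (up to constants) by the pair with `Z_1 ≡ e_1`,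
`Z_j ≡ −e_1` for `j ≥ 2`, all `Δ_j = 1` in `D`, `Δ_1` flipped to `0` in `D'`,
`T_1` the smallest time and `β = 0`, which gives value exactly `2(n−1)/n² ≥ 1/n`. -/
theorem cox_score_label_sensitivity (CZ : ℝ) :
    (∀ (n d : ℕ), 2 ≤ n → 1 ≤ d → ∀ β : EuclideanSpace ℝ (Fin d),
      ∀ D D' : SurvData n d, D.valid → D'.valid → D.covBound CZ → D'.covBound CZ →
        SurvData.LabelNeighbor D D' →
        ‖D.score β - D'.score β‖ ≤ 2 * CZ / n) ∧
    (∀ (n d : ℕ) (hn : 2 ≤ n) (hd : 1 ≤ d),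
      ∃ D D' : SurvData n d,
        D.valid ∧ D'.valid ∧ D.covBound 1 ∧ D'.covBound 1 ∧
        SurvData.LabelNeighbor D D' ∧
        (∀ t : ℝ, D.Z ⟨0, by omega⟩ t = EuclideanSpace.single (⟨0, hd⟩ : Fin d) (1 : ℝ)) ∧
        (∀ i : Fin n, i ≠ ⟨0, by omega⟩ → ∀ t : ℝ,
          D.Z i t = -EuclideanSpace.single (⟨0, hd⟩ : Fin d) (1 : ℝ)) ∧
        (∀ i : Fin n, D.Δ i = true) ∧
        D'.Δ ⟨0, by omega⟩ = false ∧
        (∀ i : Fin n, i ≠ ⟨0, by omega⟩ → D.T ⟨0, by omega⟩ < D.T i) ∧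
        ‖D.score 0 - D'.score 0‖ = 2 * (n - 1) / (n : ℝ) ^ 2 ∧
        (1 : ℝ) / n ≤ 2 * (n - 1) / (n : ℝ) ^ 2) := by
  refine ⟨fun n d _ _ β D D' hv _ hC _ h =>
    SurvData.norm_score_sub_le_of_labelNeighbor hv hC h β, ?_⟩
  intro n d hn hd
  have hn0 : 0 < n := by omega
  have h2n : (2 : ℝ) ≤ n := by exact_mod_cast hn
  open SurvData in
  refine ⟨extremal hn0 hd fun _ => true, extremal hn0 hd fun i => decide (i ≠ ⟨0, hn0⟩),
    extremal_valid _ _ _, extremal_valid _ _ _, extremal_covBound _ _ _, extremal_covBound _ _ _,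
    extremal_labelNeighbor _ _ _ fun i hi => by simp [hi], fun t => by simp [extremal],
    fun i hi t => by simp [extremal, hi], fun _ => rfl, by simp, fun i hi => by simp [extremal, hi],
    norm_score_sub_score_extremal _ _, ?_⟩
  rw [div_le_div_iff₀ (by positivity) (by positivity)]
  nlinarith
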